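/- arXiv:2409.19410 — 4 statements merged into one kernel-verified Lean document; each statement's English description precedes it below -/
import Mathlib

section
/- Let T : ℕ → ℝ be a nonneghative function satisfying T(n) ≤ C for n ≤ 100 and T(n) ≤ 2^{n + c·√n·log n} · (2 · T(⌈2n/3⌉ + d·⌈√n⌉) + n^e) for n > 100, for constants C, c, d, e. Then T(n) ≤ 8^{n + O(√n log n)}. -/
set_option maxHeartbeats 1000000 in
set_option maxRecDepth 8000 in
/-- Divide-and-conquer recurrence for CPLS: if `T n ≤ C` for `n ≤ 100` and
`T n ≤ 2^(n + c√n log n) · (2 T(⌈2n/3⌉ + d⌈√n⌉) + n^e)` for `n > 100`, then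
`T n ≤ 8^(n + O(√n log n))`. -/
theorem stmt6 (T : ℕ → ℝ) (C c : ℝ) (d e : ℕ)
    (hpos : ∀ n, 0 ≤ T n)
    (hbase : ∀ n ≤ 100, T n ≤ C)
    (hrec : ∀ n, 100 < n → T n ≤
      (2 : ℝ) ^ ((n : ℝ) + c * Real.sqrt n * Real.log n) *
        (2 * T (⌈(2 * n : ℝ) / 3⌉₊ + d * ⌈Real.sqrt n⌉₊) + (n : ℝ) ^ e)) :
    ∃ a : ℝ, ∀ n : ℕ, T n ≤ (8 : ℝ) ^ ((n : ℝ) + a * (Real.sqrt n * Real.log n + 1)) := by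
  clear hbase
  set N0 : ℕ := max ((100 * (d + 2)) ^ 2) 101 with hN0def
  have hN0a : (100 * (d + 2)) ^ 2 ≤ N0 := le_max_left _ _
  have hN0b : 101 ≤ N0 := le_max_right _ _
  clear_value N0
  obtain ⟨M, hM⟩ : ∃ M : ℝ, ∀ k ≤ N0, T k ≤ M :=
    ⟨(Finset.range (N0 + 1)).sup' (Finset.nonempty_range_iff.mpr (Nat.succ_ne_zero _)) T,
      fun k hk => Finset.le_sup' T (Finset.mem_range.mpr (Nat.lt_succ_of_le hk))⟩
  have hM0 : 0 ≤ M := le_trans (hpos 0) (hM 0 (Nat.zero_le _))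
  have hd0 : (0 : ℝ) ≤ (d : ℝ) := Nat.cast_nonneg d
  have he0 : (0 : ℝ) ≤ (e : ℝ) := Nat.cast_nonneg e
  set A : ℝ := max (10 * (|c| + 6 * (d : ℝ) + 3 * (e : ℝ) + 6)) (Real.logb 8 (M + 1)) with hAdef
  have hA1 : 10 * (|c| + 6 * (d : ℝ) + 3 * (e : ℝ) + 6) ≤ A := le_max_left _ _
  have hA0 : (0 : ℝ) ≤ A := le_trans (by positivity) hA1
  clear_value A
  have h8 : (1 : ℝ) < 8 := by norm_num
  have h8p : (0 : ℝ) < 8 := by norm_num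
  refine ⟨A, ?_⟩
  intro n
  induction n using Nat.strong_induction_on with
  | _ n ih =>
  have hln : (0 : ℝ) ≤ Real.log n := by
    rcases Nat.eq_zero_or_pos n with h | h
    · simp [h]
    · exact Real.log_nonneg (by exact_mod_cast h)
  have hsln : (0 : ℝ) ≤ Real.sqrt n * Real.log n := mul_nonneg (Real.sqrt_nonneg _) hln
  by_cases hn : n ≤ N0
  · -- base case
    have h1 : T n ≤ M + 1 := by linarith [hM n hn]
    calc T n ≤ M + 1 := h1
      _ = 8 ^ Real.logb 8 (M + 1) :=
        (Real.rpow_logb h8p (by norm_num) (by linarith)).symm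
      _ ≤ 8 ^ ((n : ℝ) + A * (Real.sqrt n * Real.log n + 1)) := by
        rw [Real.rpow_le_rpow_left_iff h8]
        have h2 : Real.logb 8 (M + 1) ≤ A := by rw [hAdef]; exact le_max_right _ _
        have h3 : (0 : ℝ) ≤ (n : ℝ) := Nat.cast_nonneg n
        nlinarith [mul_nonneg hA0 hsln]
  · push_neg at hn
    have hn101 : 100 < n := by omega
    have hnR : (102 : ℝ) ≤ (n : ℝ) := by exact_mod_cast (by omega : 102 ≤ n)
    have hnp : (0 : ℝ) < (n : ℝ) := by linarith
    set s : ℝ := Real.sqrt n with hsdef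
    set l : ℝ := Real.log n with hldef
    clear_value s l
    have hs0 : 0 ≤ s := by rw [hsdef]; exact Real.sqrt_nonneg _
    have hs1 : (1 : ℝ) ≤ s := by
      rw [hsdef]
      rw [Real.le_sqrt (by norm_num) (le_of_lt hnp)]
      nlinarith
    have hl1 : (1 : ℝ) ≤ l := by
      rw [hldef, Real.le_log_iff_exp_le hnp]
      have := Real.exp_one_lt_d9
      linarith
    have hsd : 100 * ((d : ℝ) + 2) ≤ s := by
      rw [hsdef, Real.le_sqrt (by positivity) (le_of_lt hnp)]
      have h : ((100 * (d + 2)) ^ 2 : ℕ) ≤ n := le_trans hN0a (le_of_lt hn)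
      exact_mod_cast h
    have hs2 : s ^ 2 = (n : ℝ) := by rw [hsdef]; exact Real.sq_sqrt (le_of_lt hnp)
    set m : ℕ := ⌈(2 * (n : ℝ)) / 3⌉₊ + d * ⌈s⌉₊ with hmdef
    clear_value m
    have hmub : (m : ℝ) ≤ 2 * n / 3 + 1 + d * s + d := by
      have h1 : (⌈(2 * (n : ℝ)) / 3⌉₊ : ℝ) < (2 * (n : ℝ)) / 3 + 1 :=
        Nat.ceil_lt_add_one (by positivity)
      have h2 : (⌈s⌉₊ : ℝ) < s + 1 := Nat.ceil_lt_add_one hs0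
      have h3 : (d : ℝ) * (⌈s⌉₊ : ℝ) ≤ d * (s + 1) :=
        mul_le_mul_of_nonneg_left (le_of_lt h2) hd0
      rw [hmdef]
      push_cast
      nlinarith
    have hmltR : (m : ℝ) < (n : ℝ) := by
      nlinarith [mul_nonneg (by linarith : (0 : ℝ) ≤ s - 100 * ((d : ℝ) + 2)) hs0]
    have hmn : m < n := by exact_mod_cast hmltR
    have hm1 : 1 ≤ m := by
      have : 0 < ⌈(2 * (n : ℝ)) / 3⌉₊ := Nat.ceil_pos.mpr (by positivity)
      omega
    have hm1R : (1 : ℝ) ≤ (m : ℝ) := by exact_mod_cast hm1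
    have hm81 : (m : ℝ) ≤ 81 / 100 * n := by
      nlinarith [mul_nonneg (by linarith : (0 : ℝ) ≤ s - 100 * ((d : ℝ) + 2)) hs0]
    have hsm : Real.sqrt m ≤ 9 / 10 * s := by
      have h := Real.sqrt_le_sqrt hm81
      rw [show (81 / 100 : ℝ) * n = (9 / 10) ^ 2 * (n : ℝ) by ring,
        Real.sqrt_mul (by norm_num) _, Real.sqrt_sq (by norm_num)] at h
      rw [hsdef]; exact h
    have hlm : Real.log m ≤ l := by
      rw [hldef]
      exact Real.log_le_log (by linarith) (by exact_mod_cast le_of_lt hmn)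
    have hlm0 : 0 ≤ Real.log m := Real.log_nonneg hm1R
    have hsmlm : Real.sqrt m * Real.log m ≤ 9 / 10 * (s * l) := by
      have h := mul_le_mul hsm hlm hlm0 (by positivity)
      nlinarith
    have hTm : T m ≤ (8 : ℝ) ^ ((m : ℝ) + A * (Real.sqrt m * Real.log m + 1)) := ih m hmn
    set X : ℝ := (m : ℝ) + A * (Real.sqrt m * Real.log m + 1) with hXdef
    clear_value X
    have hX0 : 0 ≤ X := by
      have h1 : (0 : ℝ) ≤ Real.sqrt m * Real.log m :=
        mul_nonneg (Real.sqrt_nonneg _) hlm0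
      have h2 : (0 : ℝ) ≤ A * (Real.sqrt m * Real.log m + 1) :=
        mul_nonneg hA0 (by linarith)
      rw [hXdef]; positivity
    have hsl0 : (0 : ℝ) ≤ s * l := mul_nonneg hs0 (by linarith)
    have hsl1 : (1 : ℝ) ≤ s * l := by
      linarith [mul_nonneg (by linarith : (0 : ℝ) ≤ s - 1) (by linarith : (0 : ℝ) ≤ l - 1)]
    have hesl0 : (0 : ℝ) ≤ (e : ℝ) * (s * l) := mul_nonneg he0 hsl0
    have hne : (n : ℝ) ^ e ≤ (8 : ℝ) ^ ((e : ℝ) * (s * l)) := by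
      have h1 : (n : ℝ) ^ e = Real.exp ((e : ℝ) * l) := by
        rw [Real.exp_nat_mul, hldef, Real.exp_log hnp]
      rw [h1, Real.rpow_def_of_pos h8p, Real.exp_le_exp]
      have hlog8 : (1 : ℝ) ≤ Real.log 8 := by
        have h2 := Real.log_two_gt_d9
        have h3 : Real.log 8 = 3 * Real.log 2 := by
          rw [show (8 : ℝ) = 2 ^ 3 by norm_num, Real.log_pow]
          push_cast; ring
        linarith
      nlinarith [mul_nonneg he0 (by linarith : (0 : ℝ) ≤ l),
        mul_nonneg (mul_nonneg he0 (by linarith : (0 : ℝ) ≤ l)) (by linarith : (0 : ℝ) ≤ s - 1),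
        mul_nonneg (by linarith : (0 : ℝ) ≤ Real.log 8 - 1) hesl0]
    have hrecn := hrec n hn101
    rw [← hsdef, ← hldef, ← hmdef] at hrecn
    have h2pow : (0 : ℝ) < (2 : ℝ) ^ ((n : ℝ) + c * s * l) := Real.rpow_pos_of_pos (by norm_num) _
    have step1 : T n ≤ (2 : ℝ) ^ ((n : ℝ) + c * s * l) *
        (2 * (8 : ℝ) ^ X + (8 : ℝ) ^ ((e : ℝ) * (s * l))) := by
      refine le_trans hrecn ?_
      apply mul_le_mul_of_nonneg_left _ (le_of_lt h2pow)
      linarith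
    have step2 : 2 * (8 : ℝ) ^ X + (8 : ℝ) ^ ((e : ℝ) * (s * l)) ≤
        3 * (8 : ℝ) ^ (X + (e : ℝ) * (s * l)) := by
      have h1 : (8 : ℝ) ^ X ≤ (8 : ℝ) ^ (X + (e : ℝ) * (s * l)) := by
        rw [Real.rpow_le_rpow_left_iff h8]; linarith
      have h2 : (8 : ℝ) ^ ((e : ℝ) * (s * l)) ≤ (8 : ℝ) ^ (X + (e : ℝ) * (s * l)) := by
        rw [Real.rpow_le_rpow_left_iff h8]; linarith
      linarith
    have step3 : 3 * (8 : ℝ) ^ (X + (e : ℝ) * (s * l)) ≤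
        (8 : ℝ) ^ (X + (e : ℝ) * (s * l) + s * l) := by
      have h1 : (3 : ℝ) ≤ (8 : ℝ) ^ (s * l) := by
        calc (3 : ℝ) ≤ (8 : ℝ) ^ (1 : ℝ) := by rw [Real.rpow_one]; norm_num
          _ ≤ (8 : ℝ) ^ (s * l) := by rw [Real.rpow_le_rpow_left_iff h8]; exact hsl1
      have hY := Real.rpow_pos_of_pos h8p (X + (e : ℝ) * (s * l))
      have h2 : (0 : ℝ) ≤ (8 : ℝ) ^ (X + (e : ℝ) * (s * l)) * ((8 : ℝ) ^ (s * l) - 3) :=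
        mul_nonneg hY.le (by linarith)
      calc 3 * (8 : ℝ) ^ (X + (e : ℝ) * (s * l)) ≤
          (8 : ℝ) ^ (X + (e : ℝ) * (s * l)) * (8 : ℝ) ^ (s * l) := by nlinarith
        _ = (8 : ℝ) ^ (X + (e : ℝ) * (s * l) + s * l) := (Real.rpow_add h8p _ _).symm
    have key : ((n : ℝ) + c * s * l) + 3 * (X + (e : ℝ) * (s * l) + s * l) ≤
        3 * ((n : ℝ) + A * (s * l + 1)) := by
      have hP1 : 3 * A * (Real.sqrt m * Real.log m) ≤ 3 * A * (9 / 10 * (s * l)) :=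
        mul_le_mul_of_nonneg_left hsmlm (by linarith)
      have hP2 : c * (s * l) ≤ |c| * (s * l) :=
        mul_le_mul_of_nonneg_right (le_abs_self c) hsl0
      have hP3 : (d : ℝ) * s ≤ (d : ℝ) * (s * l) := by
        apply mul_le_mul_of_nonneg_left _ hd0
        linarith [mul_nonneg hs0 (by linarith : (0 : ℝ) ≤ l - 1)]
      have hP4 : (d : ℝ) ≤ (d : ℝ) * (s * l) := by
        linarith [mul_nonneg hd0 (by linarith : (0 : ℝ) ≤ s * l - 1)]
      have hP5 : 10 * (|c| + 6 * (d : ℝ) + 3 * (e : ℝ) + 6) * (s * l) ≤ A * (s * l) :=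
        mul_le_mul_of_nonneg_right hA1 hsl0
      have hP8 : (0 : ℝ) ≤ A * (s * l) := mul_nonneg hA0 hsl0
      rw [hXdef]
      linarith [hmub, hP1, hP2, hP3, hP4, hP5, hP8, hsl1]
    have final : (2 : ℝ) ^ ((n : ℝ) + c * s * l) *
        (8 : ℝ) ^ (X + (e : ℝ) * (s * l) + s * l) ≤
        (8 : ℝ) ^ ((n : ℝ) + A * (s * l + 1)) := by
      rw [Real.rpow_def_of_pos (by norm_num : (0 : ℝ) < 2),
        Real.rpow_def_of_pos h8p, Real.rpow_def_of_pos h8p, ← Real.exp_add, Real.exp_le_exp]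
      have hlog8 : Real.log 8 = 3 * Real.log 2 := by
        rw [show (8 : ℝ) = 2 ^ 3 by norm_num, Real.log_pow]
        push_cast; ring
      have hl2 : (0 : ℝ) < Real.log 2 := Real.log_pos (by norm_num)
      rw [hlog8]
      linarith [mul_le_mul_of_nonneg_left key (le_of_lt hl2)]
    calc T n ≤ (2 : ℝ) ^ ((n : ℝ) + c * s * l) *
        (2 * (8 : ℝ) ^ X + (8 : ℝ) ^ ((e : ℝ) * (s * l))) := step1
      _ ≤ (2 : ℝ) ^ ((n : ℝ) + c * s * l) * (3 * (8 : ℝ) ^ (X + (e : ℝ) * (s * l))) :=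
        mul_le_mul_of_nonneg_left step2 (le_of_lt h2pow)
      _ ≤ (2 : ℝ) ^ ((n : ℝ) + c * s * l) * (8 : ℝ) ^ (X + (e : ℝ) * (s * l) + s * l) :=
        mul_le_mul_of_nonneg_left step3 (le_of_lt h2pow)
      _ ≤ (8 : ℝ) ^ ((n : ℝ) + A * (s * l + 1)) := final
end

section
/- Let T : ℕ → ℝ satisfy T(n) ≤ C for n ≤ 100 and T(n) ≤ 2^{c√n log n} · (2 · T(⌈2n/3⌉ + d⌈√n⌉) + n^e) for n > 100, for constants C, c, d, e. Then T(n) = 2^{O(√n log n)}. -/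
/-! Write `s(n) = √n log n`. Once `√n ≥ 12 (d + 1)`, the argument `m = ⌈2n/3⌉ + d⌈√n⌉` of the
recursive call is at most `3n/4`, so `s(m) ≤ √(3/4) s(n) ≤ 7/8 s(n)`. If `T m ≤ 2^{a (s(m) + 1)}`,
the recursive term is then at most `2^{c s(n) + 1 + a (s(m) + 1)}`, and the slack `a s(n) / 8` absorbs
`c s(n)` as soon as `a ≥ 8 (|c| + 1)`; the additive term is `n^e ≤ 2^{e s(n)}`. Strong induction, with
`a` also large enough to cover the finitely many values below the threshold, gives the bound. -/

open Real

lemma ceil_two_mul_div_three_add_le (d n : ℕ) (hn : (12 * (d + 1)) ^ 2 ≤ n) :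
    ((⌈(2 * n : ℝ) / 3⌉₊ + d * ⌈√n⌉₊ : ℕ) : ℝ) ≤ 3 / 4 * n := by
  have h : 12 * (d + 1) ≤ √n := (le_sqrt (by positivity) n.cast_nonneg).2 (by exact_mod_cast hn)
  have hceil₁ : (⌈(2 * n : ℝ) / 3⌉₊ : ℝ) < 2 * n / 3 + 1 := Nat.ceil_lt_add_one (by positivity)
  have hceil₂ : (⌈√n⌉₊ : ℝ) < √n + 1 := Nat.ceil_lt_add_one (sqrt_nonneg _)
  have hsq : √n * √n = n := mul_self_sqrt n.cast_nonneg
  have hd : (0 : ℝ) ≤ d := d.cast_nonneg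
  push_cast
  nlinarith [mul_le_mul_of_nonneg_left hceil₂.le hd, mul_le_mul_of_nonneg_left h (sqrt_nonneg (n : ℝ))]

lemma sqrt_mul_log_le_of_le_sq_mul {m n : ℕ} {k : ℝ} (hk : 0 ≤ k) (hm : (m : ℝ) ≤ k ^ 2 * n)
    (hmn : m ≤ n) : √m * log m ≤ k * (√n * log n) := by
  rcases m.eq_zero_or_pos with rfl | hm₀
  · simpa using by positivity
  have hsqrt : √m ≤ k * √n := by
    calc √m ≤ √(k ^ 2 * n) := sqrt_le_sqrt hm
      _ = k * √n := by rw [sqrt_mul (sq_nonneg k), sqrt_sq hk]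
  have hlog : log m ≤ log n := log_le_log (by positivity) (by exact_mod_cast hmn)
  calc √m * log m ≤ k * √n * log n :=
        mul_le_mul hsqrt hlog (log_natCast_nonneg m) (by positivity)
    _ = k * (√n * log n) := mul_assoc _ _ _

lemma two_le_sqrt_natCast {n : ℕ} (hn : 4 ≤ n) : 2 ≤ √n :=
  (le_sqrt zero_le_two n.cast_nonneg).2 (by norm_num; exact_mod_cast hn)

lemma one_le_log_natCast {n : ℕ} (hn : 3 ≤ n) : 1 ≤ log n := by
  have h3 : (3 : ℝ) ≤ n := by exact_mod_cast hn
  rw [le_log_iff_exp_le (by positivity)]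
  linarith [exp_one_lt_d9]

lemma logb_two_le_sqrt_mul_log {n : ℕ} (hn : 4 ≤ n) : logb 2 n ≤ √n * log n := by
  rw [logb, div_le_iff₀ (log_pos one_lt_two)]
  have hsqrt_log : 1 ≤ √n * log 2 := by nlinarith [log_two_gt_d9, two_le_sqrt_natCast hn]
  nlinarith [mul_le_mul_of_nonneg_left hsqrt_log (log_natCast_nonneg n)]

lemma natCast_pow_le_two_rpow (e : ℕ) {n : ℕ} (hn : 4 ≤ n) :
    (n : ℝ) ^ e ≤ 2 ^ (e * (√n * log n)) := by
  calc (n : ℝ) ^ e = 2 ^ (logb 2 n * e) := by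
        rw [rpow_mul zero_le_two, rpow_logb two_pos (by norm_num) (by positivity), rpow_natCast]
    _ ≤ 2 ^ (e * (√n * log n)) := by
        rw [mul_comm]
        exact rpow_le_rpow_of_exponent_le one_le_two
          (mul_le_mul_of_nonneg_left (logb_two_le_sqrt_mul_log hn) e.cast_nonneg)

lemma two_rpow_add_two_rpow_le {x y z : ℝ} (hx : x ≤ z - 1) (hy : y ≤ z - 1) :
    (2 : ℝ) ^ x + 2 ^ y ≤ 2 ^ z := by
  calc (2 : ℝ) ^ x + 2 ^ y ≤ 2 ^ (z - 1) + 2 ^ (z - 1) :=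
        add_le_add (rpow_le_rpow_of_exponent_le one_le_two hx)
          (rpow_le_rpow_of_exponent_le one_le_two hy)
    _ = 2 ^ z := by rw [rpow_sub two_pos, rpow_one]; ring

lemma le_two_rpow_of_le_of_logb_le {x M a s : ℝ} (hx : x ≤ M) (hM : 1 ≤ M)
    (ha : logb 2 M ≤ a) (hs : 0 ≤ s) : x ≤ 2 ^ (a * (s + 1)) := by
  have hlogb : 0 ≤ logb 2 M := logb_nonneg one_lt_two hM
  calc x ≤ M := hx
    _ = 2 ^ logb 2 M := (rpow_logb two_pos (by norm_num) (by positivity)).symm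
    _ ≤ 2 ^ (a * (s + 1)) := rpow_le_rpow_of_exponent_le one_le_two (by nlinarith)

lemma recurrence_step_le (c a t : ℝ) (e : ℕ) {m n : ℕ} (hac : 8 * (|c| + 1) ≤ a)
    (hae : |c| + e + 1 ≤ a) (hn : 4 ≤ n) (hmn : √m * log m ≤ 7 / 8 * (√n * log n))
    (ht : t ≤ 2 ^ (a * (√m * log m + 1))) :
    (2 : ℝ) ^ (c * √n * log n) * (2 * t + n ^ e) ≤ 2 ^ (a * (√n * log n + 1)) := by
  set s := √n * log n
  set sm := √m * log m
  have hs : 2 ≤ s := by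
    nlinarith [two_le_sqrt_natCast hn, one_le_log_natCast (n := n) (by omega)]
  have hcall : (2 : ℝ) ^ (c * s) * (2 * t) ≤ 2 ^ (c * s + 1 + a * (sm + 1)) := by
    calc (2 : ℝ) ^ (c * s) * (2 * t) ≤ 2 ^ (c * s) * (2 * 2 ^ (a * (sm + 1))) := by gcongr
      _ = 2 ^ (c * s + 1 + a * (sm + 1)) := by rw [rpow_add two_pos, rpow_add two_pos, rpow_one]; ring
  have hpoly : (2 : ℝ) ^ (c * s) * n ^ e ≤ 2 ^ ((c + e) * s) := by
    rw [add_mul, rpow_add two_pos]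
    gcongr
    exact natCast_pow_le_two_rpow e hn
  have ha₁ : 1 ≤ a := by linarith [abs_nonneg c, e.cast_nonneg (α := ℝ)]
  have hce : c + e ≤ a := by linarith [le_abs_self c]
  calc (2 : ℝ) ^ (c * √n * log n) * (2 * t + n ^ e)
      = 2 ^ (c * s) * (2 * t) + 2 ^ (c * s) * n ^ e := by rw [mul_assoc c, mul_add]
    _ ≤ 2 ^ (c * s + 1 + a * (sm + 1)) + 2 ^ ((c + e) * s) := add_le_add hcall hpoly
    _ ≤ 2 ^ (a * (s + 1)) := two_rpow_add_two_rpow_le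
        (by nlinarith [mul_le_mul_of_nonneg_left hmn (zero_le_one.trans ha₁), le_abs_self c])
        (by linarith [mul_le_mul_of_nonneg_right hce (show 0 ≤ s by linarith)])

theorem stmt7_general (T : ℕ → ℝ) (c : ℝ) (d e : ℕ)
    (hrec : ∀ n, 100 < n → T n ≤
      (2 : ℝ) ^ (c * Real.sqrt n * Real.log n) *
        (2 * T (⌈(2 * n : ℝ) / 3⌉₊ + d * ⌈Real.sqrt n⌉₊) + (n : ℝ) ^ e)) :
    ∃ a : ℝ, ∀ n : ℕ, T n ≤ (2 : ℝ) ^ (a * (Real.sqrt n * Real.log n + 1)) := by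
  set N := (12 * (d + 1)) ^ 2 + 100
  obtain ⟨M, hM⟩ : ∃ M, ∀ n ≤ N, T n ≤ M :=
    ((Set.finite_Iic N).image T).bddAbove.imp fun M hM n hn => hM ⟨n, hn, rfl⟩
  set a := max (max (logb 2 (max M 1)) (8 * (|c| + 1))) (|c| + e + 1)
  have hMa : logb 2 (max M 1) ≤ a := (le_max_left _ _).trans (le_max_left _ _)
  have hca : 8 * (|c| + 1) ≤ a := (le_max_right _ _).trans (le_max_left _ _)
  have hea : |c| + e + 1 ≤ a := le_max_right _ _
  refine ⟨a, fun n => ?_⟩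
  induction n using Nat.strong_induction_on with | _ n ih =>
  by_cases hn : n ≤ N
  · exact le_two_rpow_of_le_of_logb_le ((hM n hn).trans (le_max_left _ _)) (le_max_right _ _)
      hMa (mul_nonneg (sqrt_nonneg _) (log_natCast_nonneg n))
  · rw [not_le] at hn
    have hm := ceil_two_mul_div_three_add_le d n (by omega)
    set m := ⌈(2 * n : ℝ) / 3⌉₊ + d * ⌈√n⌉₊
    have hmn : m < n := by
      have hn₀ : (0 : ℝ) < n := by exact_mod_cast (by omega : 0 < n)
      have : (m : ℝ) < n := by linarith
      exact_mod_cast this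
    exact (hrec n (by omega)).trans (recurrence_step_le c a _ e hca hea (by omega)
      (sqrt_mul_log_le_of_le_sq_mul (by norm_num) (by linarith) hmn.le) (ih _ hmn))

/-- Recurrence for the fixed-embedding connected case: if `T n ≤ C` for `n ≤ 100` and
`T n ≤ 2^(c√n log n) · (2 T(⌈2n/3⌉ + d⌈√n⌉) + n^e)` for `n > 100`, then
`T n = 2^(O(√n log n))`. -/
theorem stmt7 (T : ℕ → ℝ) (C c : ℝ) (d e : ℕ)
    (hpos : ∀ n, 0 ≤ T n)
    (hbase : ∀ n ≤ 100, T n ≤ C)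
    (hrec : ∀ n, 100 < n → T n ≤
      (2 : ℝ) ^ (c * Real.sqrt n * Real.log n) *
        (2 * T (⌈(2 * n : ℝ) / 3⌉₊ + d * ⌈Real.sqrt n⌉₊) + (n : ℝ) ^ e)) :
    ∃ a : ℝ, ∀ n : ℕ, T n ≤ (2 : ℝ) ^ (a * (Real.sqrt n * Real.log n + 1)) :=
  stmt7_general T c d e hrec
end

section
/- Let H be a planar graph consisting of two vertex-disjoint 4-cycles O = (a, b, c, d) and I = (e, f, g, h) together with the four 'spoke' edges ae, bf, cg, dh (a cube graph, which is 3-connected). In any planar embedding of H, all four vertices of I lie in the same face region determined by the cycle O. -/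
open Set

/-- A planar drawing of a simple graph: vertices map injectively to the plane, each edge
is drawn as an injective continuous arc between its endpoints, arc interiors avoid all
vertices, and interiors of distinct arcs are pairwise disjoint. -/
def IsDrawing {V : Type*} (G : SimpleGraph V) (pos : V → ℝ × ℝ)
    (arc : G.edgeSet → ℝ → ℝ × ℝ) : Prop :=
  Function.Injective pos ∧
  (∀ e : G.edgeSet, ContinuousOn (arc e) (Icc 0 1)) ∧
  (∀ e : G.edgeSet, InjOn (arc e) (Icc 0 1)) ∧
  (∀ e : G.edgeSet, ∃ u v : V, (e : Sym2 V) = s(u, v) ∧ arc e 0 = pos u ∧ arc e 1 = pos v) ∧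
  (∀ e : G.edgeSet, ∀ t ∈ Ioo (0:ℝ) 1, ∀ w : V, arc e t ≠ pos w) ∧
  (∀ e f : G.edgeSet, e ≠ f → ∀ t ∈ Ioo (0:ℝ) 1, ∀ t' ∈ Ioo (0:ℝ) 1, arc e t ≠ arc f t')

/-- A simple graph is planar if it admits a planar drawing. -/
def IsPlanar {V : Type*} (G : SimpleGraph V) : Prop :=
  ∃ pos arc, IsDrawing G pos arc

/-- The cube graph `Q₃` on `Fin 8`: the outer 4-cycle `0 1 2 3`, the inner 4-cycle
`4 5 6 7`, and the four spokes `i — i+4`. -/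
def cube : SimpleGraph (Fin 8) :=
  SimpleGraph.fromRel fun i j =>
    ((i : ℕ) < 4 ∧ (j : ℕ) < 4 ∧ ((i : ℕ) + 1) % 4 = (j : ℕ)) ∨
    (4 ≤ (i : ℕ) ∧ 4 ≤ (j : ℕ) ∧ ((i : ℕ) + 1) % 4 + 4 = (j : ℕ)) ∨
    ((i : ℕ) + 4 = (j : ℕ))

/-- In every planar drawing of the cube graph, all four vertices of the inner 4-cycle lie
in the same region of the complement of the drawing of the outer 4-cycle `O`. -/
theorem stmt14 (pos : Fin 8 → ℝ × ℝ) (arc : cube.edgeSet → ℝ → ℝ × ℝ)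
    (h : IsDrawing cube pos arc) (i j : Fin 8) (hi : 4 ≤ (i : ℕ)) (hj : 4 ≤ (j : ℕ)) :
    pos j ∈ connectedComponentIn
      (⋃ e : {e : cube.edgeSet // ∀ x ∈ (e : Sym2 (Fin 8)), (x : ℕ) < 4},
        arc e.1 '' Set.Icc 0 1)ᶜ (pos i) := by
  obtain ⟨hinj, hcont, hinjon, hends, hnov, hdisj⟩ := h
  set S := (⋃ e : {e : cube.edgeSet // ∀ x ∈ (e : Sym2 (Fin 8)), (x : ℕ) < 4},
        arc e.1 '' Set.Icc 0 1)ᶜ with hSdef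
  -- vertices with index ≥ 4 are not on any outer arc
  have memS : ∀ u : Fin 8, 4 ≤ (u : ℕ) → pos u ∈ S := by
    intro u hu
    simp only [hSdef, mem_compl_iff, mem_iUnion, not_exists]
    rintro ⟨f, hf⟩ ⟨t', ht', hpt⟩
    obtain ⟨a, b, hfab, ha0, hb1⟩ := hends f
    have ha4 : (a : ℕ) < 4 := hf a (by rw [hfab]; exact Sym2.mem_mk_left a b)
    have hb4 : (b : ℕ) < 4 := hf b (by rw [hfab]; exact Sym2.mem_mk_right a b)
    rcases ht'.1.eq_or_lt with h0 | h0
    · have : a = u := hinj (by rw [← ha0, h0, hpt])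
      omega
    rcases ht'.2.eq_or_lt with h1 | h1
    · have : b = u := hinj (by rw [← hb1, ← h1, hpt])
      omega
    · exact hnov f t' ⟨h0, h1⟩ u hpt
  -- arcs of inner edges avoid all outer arcs, hence connect their endpoints inside S
  have key : ∀ (e : cube.edgeSet) (u v : Fin 8), 4 ≤ (u : ℕ) → 4 ≤ (v : ℕ) →
      (e : Sym2 (Fin 8)) = s(u, v) → pos v ∈ connectedComponentIn S (pos u) := by
    intro e u v hu hv he
    obtain ⟨u', v', he', h0, h1⟩ := hends e
    have hmemu' : u' ∈ (e : Sym2 (Fin 8)) := by rw [he']; exact Sym2.mem_mk_left _ _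
    have hmemv' : v' ∈ (e : Sym2 (Fin 8)) := by rw [he']; exact Sym2.mem_mk_right _ _
    have hu'4 : 4 ≤ (u' : ℕ) := by
      rw [he, Sym2.mem_iff] at hmemu'
      rcases hmemu' with rfl | rfl <;> assumption
    have hv'4 : 4 ≤ (v' : ℕ) := by
      rw [he, Sym2.mem_iff] at hmemv'
      rcases hmemv' with rfl | rfl <;> assumption
    have hsub : arc e '' Icc 0 1 ⊆ S := by
      rintro p ⟨t, ht, rfl⟩
      simp only [hSdef, mem_compl_iff, mem_iUnion, not_exists]
      rintro ⟨f, hf⟩ ⟨t', ht', hpt⟩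
      obtain ⟨a, b, hfab, ha0, hb1⟩ := hends f
      have ha4 : (a : ℕ) < 4 := hf a (by rw [hfab]; exact Sym2.mem_mk_left a b)
      have hb4 : (b : ℕ) < 4 := hf b (by rw [hfab]; exact Sym2.mem_mk_right a b)
      have hef : e ≠ f := by
        intro hef
        have : u' ∈ (f : Sym2 (Fin 8)) := hef ▸ hmemu'
        have := hf u' this
        omega
      rcases ht.1.eq_or_lt with ht0 | ht0
      · have hpu : arc e t = pos u' := by rw [← ht0, h0]
        rcases ht'.1.eq_or_lt with h0' | h0'
        · have : a = u' := hinj (by rw [← ha0, h0', hpt, hpu])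
          omega
        rcases ht'.2.eq_or_lt with h1' | h1'
        · have : b = u' := hinj (by rw [← hb1, ← h1', hpt, hpu])
          omega
        · exact hnov f t' ⟨h0', h1'⟩ u' (by rw [hpt, hpu])
      rcases ht.2.eq_or_lt with ht1 | ht1
      · have hpv : arc e t = pos v' := by rw [ht1, h1]
        rcases ht'.1.eq_or_lt with h0' | h0'
        · have : a = v' := hinj (by rw [← ha0, h0', hpt, hpv])
          omega
        rcases ht'.2.eq_or_lt with h1' | h1'
        · have : b = v' := hinj (by rw [← hb1, ← h1', hpt, hpv])
          omega
        · exact hnov f t' ⟨h0', h1'⟩ v' (by rw [hpt, hpv])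
      · rcases ht'.1.eq_or_lt with h0' | h0'
        · exact hnov e t ⟨ht0, ht1⟩ a (by rw [← hpt, ← h0', ha0])
        rcases ht'.2.eq_or_lt with h1' | h1'
        · exact hnov e t ⟨ht0, ht1⟩ b (by rw [← hpt, h1', hb1])
        · exact hdisj e f hef t ⟨ht0, ht1⟩ t' ⟨h0', h1'⟩ hpt.symm
    have hconn : IsPreconnected (arc e '' Icc 0 1) :=
      isPreconnected_Icc.image _ (hcont e)
    have hu'mem : pos u' ∈ arc e '' Icc 0 1 := ⟨0, by norm_num, h0⟩
    have hv'mem : pos v' ∈ arc e '' Icc 0 1 := ⟨1, by norm_num, h1⟩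
    rw [he] at he'
    rcases Sym2.eq_iff.mp he'.symm with ⟨rfl, rfl⟩ | ⟨rfl, rfl⟩
    · exact hconn.subset_connectedComponentIn hu'mem hsub hv'mem
    · exact hconn.subset_connectedComponentIn hv'mem hsub hu'mem
  have htrans : ∀ x y z : ℝ × ℝ, y ∈ connectedComponentIn S x →
      z ∈ connectedComponentIn S y → z ∈ connectedComponentIn S x := by
    intro x y z h1 h2
    rwa [← connectedComponentIn_eq h1] at h2
  have hsymm : ∀ x y : ℝ × ℝ, x ∈ S → y ∈ connectedComponentIn S x →
      x ∈ connectedComponentIn S y := by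
    intro x y hx h1
    rw [← connectedComponentIn_eq h1]
    exact mem_connectedComponentIn hx
  -- the inner-cycle edges
  have e45 : s((4 : Fin 8), 5) ∈ cube.edgeSet := by
    rw [SimpleGraph.mem_edgeSet, cube, SimpleGraph.fromRel_adj]; refine ⟨by decide, ?_⟩ ; decide
  have e56 : s((5 : Fin 8), 6) ∈ cube.edgeSet := by
    rw [SimpleGraph.mem_edgeSet, cube, SimpleGraph.fromRel_adj]; refine ⟨by decide, ?_⟩ ; decide
  have e67 : s((6 : Fin 8), 7) ∈ cube.edgeSet := by
    rw [SimpleGraph.mem_edgeSet, cube, SimpleGraph.fromRel_adj]; refine ⟨by decide, ?_⟩ ; decide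
  have s45 : pos 5 ∈ connectedComponentIn S (pos 4) :=
    key ⟨_, e45⟩ 4 5 (by decide) (by decide) rfl
  have s56 : pos 6 ∈ connectedComponentIn S (pos 5) :=
    key ⟨_, e56⟩ 5 6 (by decide) (by decide) rfl
  have s67 : pos 7 ∈ connectedComponentIn S (pos 6) :=
    key ⟨_, e67⟩ 6 7 (by decide) (by decide) rfl
  have c44 : pos 4 ∈ connectedComponentIn S (pos 4) :=
    mem_connectedComponentIn (memS 4 (by decide))
  have c46 : pos 6 ∈ connectedComponentIn S (pos 4) := htrans _ _ _ s45 s56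
  have c47 : pos 7 ∈ connectedComponentIn S (pos 4) := htrans _ _ _ c46 s67
  have conn4 : ∀ v : Fin 8, 4 ≤ (v : ℕ) → pos v ∈ connectedComponentIn S (pos 4) := by
    intro v hv
    fin_cases v <;>
      first
        | exact absurd hv (by decide)
        | exact c44
        | exact s45
        | exact c46
        | exact c47
  exact htrans _ _ _ (hsymm _ _ (memS 4 (by decide)) (conn4 i hi)) (conn4 j hj)
end

section
/- If a clustered graph (G, V) admits a linear saturation, then so does (G - v, V - v) for any vertex v, where V - v denotes the clustering with v removed from its cluster. -/
open Set

/-- The induced subgraph of `H` on `s` is a path: its vertices can be linearly ordered so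
that adjacency is exactly consecutiveness. -/
def InducesPath {V : Type*} (H : SimpleGraph V) (s : Set V) : Prop :=
  ∃ (n : ℕ) (f : Fin n ≃ s), ∀ a b : Fin n,
    H.Adj (f a : V) (f b : V) ↔ ((a : ℕ) + 1 = (b : ℕ) ∨ (b : ℕ) + 1 = (a : ℕ))

/-- A clustered graph `(G, c)` admits a linear saturation: a planar supergraph `H` of `G`
whose new (saturating) edges join vertices of the same cluster and in which every cluster
induces a path. -/
def HasLinearSaturation {V ι : Type*} (G : SimpleGraph V) (c : V → ι) : Prop :=
  ∃ H : SimpleGraph V, G ≤ H ∧ IsPlanar H ∧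
    (∀ u v : V, H.Adj u v → ¬ G.Adj u v → c u = c v) ∧
    (∀ i : ι, InducesPath H {v | c v = i})

/-!
In a linear saturation `H` of `(G, c)` the cluster of `v` is a path through `v`. If `v` is an
end of that path, `H - v` is a linear saturation of `(G - v, c - v)`. Otherwise `v` has two
path neighbours `a` and `b`, and `H - v + ab` is one: the new edge `ab` is drawn along the
arcs of `av` and `vb` through the point where `v` was, and it closes the gap that deleting `v`
leaves in the path.
-/

open SimpleGraph

section ArcConcat

variable {X : Type*}

noncomputable def arcConcat (A B : ℝ → X) (t : ℝ) : X :=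
  if t ≤ 1 / 2 then A (2 * t) else B (2 * t - 1)

variable {A B : ℝ → X} {t : ℝ}

lemma arcConcat_of_le (ht : t ≤ 1 / 2) : arcConcat A B t = A (2 * t) := if_pos ht

lemma arcConcat_of_lt (ht : 1 / 2 < t) : arcConcat A B t = B (2 * t - 1) := if_neg ht.not_ge

lemma arcConcat_zero : arcConcat A B 0 = A 0 := by
  rw [arcConcat_of_le (by norm_num), mul_zero]

lemma arcConcat_one : arcConcat A B 1 = B 1 := by
  rw [arcConcat_of_lt (by norm_num)]; norm_num

lemma arcConcat_mem_of_mem_Ioo (ht : t ∈ Ioo (0 : ℝ) 1) :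
    arcConcat A B t ∈ A '' Ioo 0 1 ∪ {A 1} ∪ B '' Ioo 0 1 := by
  obtain ⟨h0, h1⟩ := ht
  rcases lt_trichotomy t (1 / 2) with h | rfl | h
  · rw [arcConcat_of_le h.le]
    exact .inl (.inl ⟨2 * t, ⟨by linarith, by linarith⟩, rfl⟩)
  · rw [arcConcat_of_le le_rfl]
    exact .inl (.inr (by norm_num))
  · rw [arcConcat_of_lt h]
    exact .inr ⟨2 * t - 1, ⟨by linarith, by linarith⟩, rfl⟩

lemma continuousOn_arcConcat [TopologicalSpace X] (hA : ContinuousOn A (Icc 0 1))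
    (hB : ContinuousOn B (Icc 0 1)) (hAB : A 1 = B 0) :
    ContinuousOn (arcConcat A B) (Icc 0 1) := by
  have hleft : ContinuousOn (arcConcat A B) (Icc 0 (1 / 2)) := by
    refine (hA.comp (f := fun t : ℝ => 2 * t) (by fun_prop) fun t ht => ?_).congr
      fun t ht => arcConcat_of_le ht.2
    exact ⟨by linarith [ht.1], by linarith [ht.2]⟩
  have hright : ContinuousOn (arcConcat A B) (Icc (1 / 2) 1) := by
    refine (hB.comp (f := fun t : ℝ => 2 * t - 1) (by fun_prop) fun t ht => ?_).congr
      fun t ht => ?_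
    · exact ⟨by linarith [ht.1], by linarith [ht.2]⟩
    · rcases ht.1.eq_or_lt with rfl | h
      · rw [arcConcat_of_le le_rfl]; norm_num [hAB]
      · exact arcConcat_of_lt h
  rw [← Icc_union_Icc_eq_Icc (by norm_num : (0 : ℝ) ≤ 1 / 2) (by norm_num)]
  exact hleft.union_of_isClosed hright isClosed_Icc isClosed_Icc

lemma injOn_arcConcat (hA : InjOn A (Icc 0 1)) (hB : InjOn B (Icc 0 1))
    (hmeet : A '' Icc 0 1 ∩ B '' Icc 0 1 ⊆ {B 0}) :
    InjOn (arcConcat A B) (Icc 0 1) := by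
  have hcross : ∀ s ∈ Icc (0 : ℝ) 1, ∀ s' ∈ Ioc (0 : ℝ) 1, A s ≠ B s' := fun s hs s' hs' h =>
    hs'.1.ne' <| hB ⟨hs'.1.le, hs'.2⟩ ⟨le_rfl, zero_le_one⟩ <|
      hmeet ⟨⟨s, hs, h⟩, s', ⟨hs'.1.le, hs'.2⟩, rfl⟩
  intro t ht t' ht' h
  rcases le_or_gt t (1 / 2) with h₁ | h₁ <;> rcases le_or_gt t' (1 / 2) with h₂ | h₂ <;>
    simp only [arcConcat_of_le, arcConcat_of_lt, h₁, h₂] at h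
  · have := hA ⟨by linarith [ht.1], by linarith⟩ ⟨by linarith [ht'.1], by linarith⟩ h
    linarith
  · exact (hcross _ ⟨by linarith [ht.1], by linarith⟩ _ ⟨by linarith, by linarith [ht'.2]⟩ h).elim
  · exact (hcross _ ⟨by linarith [ht'.1], by linarith⟩ _ ⟨by linarith, by linarith [ht.2]⟩
      h.symm).elim
  · have := hB ⟨by linarith, by linarith [ht.2]⟩ ⟨by linarith, by linarith [ht'.2]⟩ h
    linarith

end ArcConcat

namespace IsDrawing

variable {V W : Type*} {G : SimpleGraph V} {pos : V → ℝ × ℝ} {arc : G.edgeSet → ℝ → ℝ × ℝ}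

lemma exists_arc (hD : IsDrawing G pos arc) (e : G.edgeSet) {x y : V}
    (hxy : (e : Sym2 V) = s(x, y)) :
    ∃ A : ℝ → ℝ × ℝ, ContinuousOn A (Icc 0 1) ∧ InjOn A (Icc 0 1) ∧ A 0 = pos x ∧
      A 1 = pos y ∧ A '' Ioo 0 1 ⊆ arc e '' Ioo 0 1 := by
  obtain ⟨-, hcont, hinj, hend, -, -⟩ := hD
  obtain ⟨u, w, huw, h0, h1⟩ := hend e
  rw [hxy, Sym2.eq_iff] at huw
  rcases huw with ⟨rfl, rfl⟩ | ⟨rfl, rfl⟩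
  · exact ⟨arc e, hcont e, hinj e, h0, h1, subset_rfl⟩
  · have hflip : MapsTo (fun t : ℝ => 1 - t) (Icc 0 1) (Icc 0 1) := fun t ht =>
      ⟨by linarith [ht.2], by linarith [ht.1]⟩
    refine ⟨fun t => arc e (1 - t), (hcont e).comp (by fun_prop) hflip,
      (hinj e).comp (fun t _ t' _ h => by linarith [show 1 - t = 1 - t' from h]) hflip,
      by simpa using h1, by simpa using h0, ?_⟩
    rintro _ ⟨t, ht, rfl⟩
    exact ⟨1 - t, ⟨by linarith [ht.2], by linarith [ht.1]⟩, rfl⟩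

lemma pos_notMem_image_arc (hD : IsDrawing G pos arc) (e : G.edgeSet) (w : V) :
    pos w ∉ arc e '' Ioo 0 1 :=
  fun ⟨t, ht, h⟩ => hD.2.2.2.2.1 e t ht w h

lemma notMem_image_arc_of_ne (hD : IsDrawing G pos arc) {e f : G.edgeSet} (hef : e ≠ f)
    {x : ℝ × ℝ} (hx : x ∈ arc e '' Ioo 0 1) : x ∉ arc f '' Ioo 0 1 :=
  fun ⟨t', ht', h'⟩ => let ⟨t, ht, h⟩ := hx; hD.2.2.2.2.2 e f hef t ht t' ht' (h.trans h'.symm)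

lemma comap (hD : IsDrawing G pos arc) {K : SimpleGraph W} (φ : K →g G)
    (hφ : Function.Injective φ) : IsDrawing K (pos ∘ φ) (arc ∘ φ.mapEdgeSet) := by
  obtain ⟨hpos, hcont, hinj, hend, havoid, hdisj⟩ := hD
  refine ⟨hpos.comp hφ, fun e => hcont _, fun e => hinj _, ?_, fun e t ht w => havoid _ t ht _,
    fun e f hef => hdisj _ _ ((Hom.mapEdgeSet.injective φ hφ).ne hef)⟩
  rintro ⟨e, he⟩
  induction e with
  | _ x y =>
    obtain ⟨u, w, huw, h0, h1⟩ := hend (φ.mapEdgeSet ⟨s(x, y), he⟩)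
    simp only [Hom.mapEdgeSet_coe, Sym2.map_mk, Sym2.eq_iff] at huw
    rcases huw with ⟨rfl, rfl⟩ | ⟨rfl, rfl⟩
    · exact ⟨x, y, rfl, h0, h1⟩
    · exact ⟨y, x, Sym2.eq_swap, h0, h1⟩

lemma isPlanar_sup_edge (hD : IsDrawing G pos arc) {a b : V} (hab : a ≠ b) {F : ℝ → ℝ × ℝ}
    (hFc : ContinuousOn F (Icc 0 1)) (hFi : InjOn F (Icc 0 1)) (hF0 : F 0 = pos a)
    (hF1 : F 1 = pos b) (hFv : ∀ t ∈ Ioo (0 : ℝ) 1, ∀ w, F t ≠ pos w)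
    (hFe : ∀ e : G.edgeSet, ∀ t ∈ Ioo (0 : ℝ) 1, ∀ t' ∈ Ioo (0 : ℝ) 1, F t ≠ arc e t') :
    IsPlanar (G ⊔ edge a b) := by
  classical
  obtain ⟨hpos, hcont, hinj, hend, havoid, hdisj⟩ := hD
  have hnew : ∀ e : (G ⊔ edge a b).edgeSet, (e : Sym2 V) ∉ G.edgeSet → (e : Sym2 V) = s(a, b) :=
    fun ⟨e, he⟩ h => by
      rw [edgeSet_sup, edgeSet_edge_of_ne hab] at he
      exact he.resolve_left h
  refine ⟨pos, fun e => if h : (e : Sym2 V) ∈ G.edgeSet then arc ⟨e, h⟩ else F, hpos, ?_, ?_, ?_,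
    ?_, ?_⟩
  · intro e
    dsimp only
    split_ifs
    exacts [hcont _, hFc]
  · intro e
    dsimp only
    split_ifs
    exacts [hinj _, hFi]
  · intro e
    dsimp only
    split_ifs with h
    exacts [hend ⟨e, h⟩, ⟨a, b, hnew e h, hF0, hF1⟩]
  · intro e t ht w
    dsimp only
    split_ifs
    exacts [havoid _ t ht w, hFv t ht w]
  · intro e f hef t ht t' ht'
    have hval : (e : Sym2 V) ≠ f := fun h => hef (Subtype.ext h)
    dsimp only
    split_ifs with he hf hf
    · exact hdisj _ _ (fun h => hval (Subtype.mk.inj h)) t ht t' ht'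
    · exact (hFe _ t' ht' t ht).symm
    · exact hFe _ t ht t' ht'
    · exact absurd ((hnew e he).trans (hnew f hf).symm) hval

end IsDrawing

lemma IsPlanar.induce {V : Type*} {H : SimpleGraph V} (hH : IsPlanar H) (s : Set V) :
    IsPlanar (H.induce s) :=
  let ⟨_, _, hD⟩ := hH
  ⟨_, _, hD.comap (Embedding.induce s).toHom Subtype.val_injective⟩

lemma SimpleGraph.induce_sup_edge {V : Type*} (H : SimpleGraph V) {s : Set V} {a b : V}
    (ha : a ∈ s) (hb : b ∈ s) :
    (H ⊔ edge a b).induce s = H.induce s ⊔ edge ⟨a, ha⟩ ⟨b, hb⟩ := by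
  ext x y
  simp [edge_adj, Subtype.ext_iff]

lemma IsPlanar.induce_sup_edge {V : Type*} {H : SimpleGraph V} (hH : IsPlanar H) {a b v : V}
    (hav : H.Adj a v) (hvb : H.Adj v b) (hab : a ≠ b) :
    IsPlanar ((H ⊔ edge a b).induce {u | u ≠ v}) := by
  obtain ⟨pos, arc, hD⟩ := hH
  let e₁ : H.edgeSet := ⟨s(a, v), hav⟩
  let e₂ : H.edgeSet := ⟨s(v, b), hvb⟩
  have he₁₂ : e₁ ≠ e₂ := fun h => by
    have h' : s(a, v) = s(v, b) := congrArg Subtype.val h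
    rcases Sym2.eq_iff.mp h' with ⟨h, -⟩ | ⟨h, -⟩
    exacts [hav.ne h, hab h]
  obtain ⟨A, hAc, hAi, hA0, hA1, hAI⟩ := hD.exists_arc e₁ rfl
  obtain ⟨B, hBc, hBi, hB0, hB1, hBI⟩ := hD.exists_arc e₂ rfl
  have hImage : ∀ {C : ℝ → ℝ × ℝ}, C '' Icc 0 1 = {C 0, C 1} ∪ C '' Ioo 0 1 := by
    intro C
    rw [← Ioo_union_both zero_le_one, image_union, image_pair, union_comm]
  have hmeet : A '' Icc 0 1 ∩ B '' Icc 0 1 ⊆ {B 0} := by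
    rintro x ⟨hxA, hxB⟩
    rw [hImage, hA0, hA1] at hxA
    rw [hImage, hB0, hB1] at hxB
    rw [hB0, mem_singleton_iff]
    rcases hxA with (rfl | rfl) | hxA
    · rcases hxB with (h | h) | h
      · exact h
      · exact absurd (hD.1 h) hab
      · exact absurd (hBI h) (hD.pos_notMem_image_arc _ _)
    · rfl
    · rcases hxB with (rfl | rfl) | hxB
      · rfl
      · exact absurd (hAI hxA) (hD.pos_notMem_image_arc _ _)
      · exact absurd (hBI hxB) (hD.notMem_image_arc_of_ne he₁₂ (hAI hxA))
  have hF : ∀ t ∈ Ioo (0 : ℝ) 1,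
      arcConcat A B t ∈ arc e₁ '' Ioo 0 1 ∪ {pos v} ∪ arc e₂ '' Ioo 0 1 := fun t ht =>
    union_subset_union (union_subset_union hAI (by rw [hA1])) hBI (arcConcat_mem_of_mem_Ioo ht)
  rw [H.induce_sup_edge (show a ≠ v from hav.ne) hvb.ne']
  refine (hD.comap (Embedding.induce _).toHom Subtype.val_injective).isPlanar_sup_edge
    (fun h => hab (congrArg Subtype.val h)) (continuousOn_arcConcat hAc hBc (hA1.trans hB0.symm))
    (injOn_arcConcat hAi hBi hmeet) (by rw [arcConcat_zero, hA0]; rfl)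
    (by rw [arcConcat_one, hB1]; rfl) ?_ ?_
  · intro t ht w hw
    rcases hF t ht with (h | h) | h
    · exact hD.pos_notMem_image_arc e₁ w (by rwa [hw] at h)
    · exact w.2 (hD.1 (hw.symm.trans h))
    · exact hD.pos_notMem_image_arc e₂ w (by rwa [hw] at h)
  · intro e t ht t' ht' he
    set e' := (Embedding.induce {u | u ≠ v}).toHom.mapEdgeSet e
    have hne : ∀ f : H.edgeSet, v ∈ (f : Sym2 V) → f ≠ e' := by
      rintro f hf rfl
      obtain ⟨u, -, hu⟩ := Sym2.mem_map.mp hf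
      exact u.2 hu
    have he' : arcConcat A B t ∈ arc e' '' Ioo 0 1 := ⟨t', ht', he.symm⟩
    rcases hF t ht with (h | h) | h
    · exact hD.notMem_image_arc_of_ne (hne e₁ (Sym2.mem_mk_right _ _)) h he'
    · exact hD.pos_notMem_image_arc e' v (h ▸ he')
    · exact hD.notMem_image_arc_of_ne (hne e₂ (Sym2.mem_mk_left _ _)) h he'

lemma Fin.val_succAbove {m : ℕ} (k : Fin (m + 1)) (i : Fin m) :
    (k.succAbove i : ℕ) = if (i : ℕ) < k then (i : ℕ) else (i : ℕ) + 1 := by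
  rcases lt_or_ge i.castSucc k with h | h
  · rw [Fin.succAbove_of_castSucc_lt _ _ h, if_pos (show (i : ℕ) < k from h)]; rfl
  · rw [Fin.succAbove_of_le_castSucc _ _ h, if_neg (show ¬(i : ℕ) < k from not_lt.mpr h)]; rfl

lemma pathGraph_adj_succAbove_iff {m : ℕ} {k : Fin (m + 1)}
    (hk : ∀ p q, (pathGraph (m + 1)).Adj p k → (pathGraph (m + 1)).Adj k q → p = q)
    (i j : Fin m) :
    (pathGraph (m + 1)).Adj (k.succAbove i) (k.succAbove j) ↔ (pathGraph m).Adj i j := by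
  have hk' : (k : ℕ) = 0 ∨ (k : ℕ) = m := by
    by_contra! h
    have := k.isLt
    have := hk ⟨k - 1, by omega⟩ ⟨k + 1, by omega⟩
      (pathGraph_adj.mpr (.inl (by dsimp only; omega))) (pathGraph_adj.mpr (.inl rfl))
    simp only [Fin.mk.injEq] at this
    omega
  simp only [pathGraph_adj, Fin.val_succAbove]
  split_ifs <;> omega

lemma pathGraph_adj_succAbove_or_iff {m : ℕ} {k p q : Fin (m + 1)}
    (hp : (pathGraph (m + 1)).Adj p k) (hq : (pathGraph (m + 1)).Adj k q) (hpq : p ≠ q)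
    (i j : Fin m) :
    ((pathGraph (m + 1)).Adj (k.succAbove i) (k.succAbove j) ∨
        (k.succAbove i = p ∧ k.succAbove j = q ∨ k.succAbove i = q ∧ k.succAbove j = p)) ↔
      (pathGraph m).Adj i j := by
  rw [pathGraph_adj] at hp hq
  rw [Ne, Fin.ext_iff] at hpq
  simp only [pathGraph_adj, Fin.ext_iff, Fin.val_succAbove]
  split_ifs <;> omega

section InducesPath

variable {V W : Type*} {H : SimpleGraph V} {s : Set V}

lemma InducesPath.of_equiv {K : SimpleGraph W} {t : Set W} (hs : InducesPath H s) (e : s ≃ t)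
    (he : ∀ x y : s, K.Adj (e x) (e y) ↔ H.Adj x y) : InducesPath K t :=
  let ⟨n, f, hf⟩ := hs
  ⟨n, f.trans e, fun a b => (he _ _).trans (hf a b)⟩

lemma InducesPath.congr_adj {K : SimpleGraph V} (hs : InducesPath H s)
    (h : ∀ x ∈ s, ∀ y ∈ s, K.Adj x y ↔ H.Adj x y) : InducesPath K s :=
  hs.of_equiv (Equiv.refl s) fun x y => h x x.2 y y.2

lemma InducesPath.induce {U : Set V} {s : Set U} (hs : InducesPath H (Subtype.val '' s)) :
    InducesPath (H.induce U) s := by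
  refine hs.of_equiv (Equiv.Set.image Subtype.val s Subtype.val_injective).symm fun x y => ?_
  obtain ⟨x, rfl⟩ := (Equiv.Set.image Subtype.val s Subtype.val_injective).surjective x
  obtain ⟨y, rfl⟩ := (Equiv.Set.image Subtype.val s Subtype.val_injective).surjective y
  simp

lemma InducesPath.exists_succAbove (hs : InducesPath H s) {v : V} (hv : v ∈ s) :
    ∃ (m : ℕ) (f : Fin (m + 1) ≃ s) (k : Fin (m + 1)) (g : Fin m ≃ ↥(s \ {v})),
      (f k : V) = v ∧ (∀ p q, H.Adj (f p) (f q) ↔ (pathGraph (m + 1)).Adj p q) ∧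
        ∀ j, (g j : V) = f (k.succAbove j) := by
  obtain ⟨n, f, hf⟩ := hs
  obtain ⟨m, rfl⟩ : ∃ m, n = m + 1 := Nat.exists_eq_add_one.mpr (f.symm ⟨v, hv⟩).pos
  set k := f.symm ⟨v, hv⟩
  have hfk : (f k : V) = v := by simp [k]
  let g : Fin m → ↥(s \ {v}) := fun j => ⟨f (k.succAbove j), (f _).2,
    fun h => k.succAbove_ne j (f.injective (Subtype.ext (h.trans hfk.symm)))⟩
  have hg : Function.Bijective g := by
    refine ⟨fun i j h => ?_, ?_⟩
    · have h' := congrArg Subtype.val h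
      simp only [g] at h'
      exact Fin.succAbove_right_injective (f.injective (Subtype.ext h'))
    · rintro ⟨x, hxs, hxv⟩
      have hne : f.symm ⟨x, hxs⟩ ≠ k := fun h => hxv (by simpa [k] using h)
      obtain ⟨j, hj⟩ := Fin.exists_succAbove_eq hne
      exact ⟨j, Subtype.ext (by simp [g, hj])⟩
  exact ⟨m, f, k, .ofBijective g hg, hfk, fun p q => (hf p q).trans pathGraph_adj.symm,
    fun j => rfl⟩

lemma InducesPath.diff_singleton {v : V} (hs : InducesPath H s) (hv : v ∈ s)
    (hend : ∀ a ∈ s, ∀ b ∈ s, H.Adj a v → H.Adj v b → a = b) :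
    InducesPath H (s \ {v}) := by
  obtain ⟨m, f, k, g, hfk, hf, hg⟩ := hs.exists_succAbove hv
  refine ⟨m, g, fun i j => ?_⟩
  rw [hg, hg, hf, pathGraph_adj_succAbove_iff, pathGraph_adj]
  intro p q hp hq
  rw [← hf, hfk] at hp hq
  exact f.injective (Subtype.ext (hend _ (f p).2 _ (f q).2 hp hq))

lemma InducesPath.diff_singleton_sup_edge {v : V} (hs : InducesPath H s) (hv : v ∈ s) {a b : V}
    (ha : a ∈ s) (hb : b ∈ s) (hav : H.Adj a v) (hvb : H.Adj v b) (hab : a ≠ b) :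
    InducesPath (H ⊔ edge a b) (s \ {v}) := by
  obtain ⟨m, f, k, g, hfk, hf, hg⟩ := hs.exists_succAbove hv
  obtain ⟨p, hp⟩ := f.surjective ⟨a, ha⟩
  obtain ⟨q, hq⟩ := f.surjective ⟨b, hb⟩
  obtain rfl : (f p : V) = a := congrArg Subtype.val hp
  obtain rfl : (f q : V) = b := congrArg Subtype.val hq
  rw [← hfk, hf] at hav hvb
  refine ⟨m, g, fun i j => ?_⟩
  rw [← pathGraph_adj, ← pathGraph_adj_succAbove_or_iff hav hvb (fun h => hab (by rw [h])),
    sup_adj, edge_adj, hg, hg, hf]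
  simp only [Subtype.coe_inj, f.injective.eq_iff]
  rw [and_iff_left_of_imp]
  rintro (⟨h₁, h₂⟩ | ⟨h₁, h₂⟩) <;> rw [h₁, h₂]
  exacts [hab, hab.symm]

end InducesPath

lemma hasLinearSaturation_induce_ne_of_le {V ι : Type*} {G H H₁ : SimpleGraph V} {c : V → ι}
    {v : V} (hGH : G ≤ H) (hsat : ∀ x y, H.Adj x y → ¬G.Adj x y → c x = c y)
    (hpath : ∀ i, InducesPath H {u | c u = i}) (hle : H ≤ H₁)
    (hplanar : IsPlanar (H₁.induce {u | u ≠ v}))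
    (hnew : ∀ x y, H₁.Adj x y → ¬H.Adj x y → c x = c v ∧ c y = c v)
    (hcluster : InducesPath H₁ ({u | c u = c v} \ {v})) :
    HasLinearSaturation (G.induce {u | u ≠ v}) (fun u => c u) := by
  refine ⟨H₁.induce {u | u ≠ v}, fun x y h => hle (hGH h), hplanar, fun x y h h' => ?_,
    fun i => .induce ?_⟩
  · by_cases hH : H.Adj x y
    · exact hsat _ _ hH h'
    · obtain ⟨hx, hy⟩ := hnew _ _ h hH
      exact hx.trans hy.symm
  have hset : Subtype.val '' {x : {u | u ≠ v} | c x = i} = {u | c u = i} \ {v} := by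
    ext u
    exact ⟨fun ⟨x, hx, hxu⟩ => hxu ▸ ⟨hx, x.2⟩, fun ⟨hu, huv⟩ => ⟨⟨u, huv⟩, hu, rfl⟩⟩
  rw [hset]
  by_cases hi : i = c v
  · exact hi ▸ hcluster
  · rw [sdiff_singleton_eq_self fun h => hi h.symm]
    exact (hpath i).congr_adj fun x hx y _ =>
      ⟨fun h => by_contra fun hH => hi (hx ▸ (hnew x y h hH).1), fun h => hle h⟩

/-- Yes-instances of CPLS are closed under vertex deletion: if `(G, c)` admits a linear
saturation, then so does `(G - v, c - v)`. -/
theorem stmt17 {V ι : Type*} (G : SimpleGraph V) (c : V → ι) (v : V)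
    (h : HasLinearSaturation G c) :
    HasLinearSaturation (G.induce {u | u ≠ v}) (fun u => c u) := by
  obtain ⟨H, hGH, hH, hsat, hpath⟩ := h
  have hv : v ∈ {u | c u = c v} := rfl
  by_cases hinterior : ∃ a b, c a = c v ∧ c b = c v ∧ H.Adj a v ∧ H.Adj v b ∧ a ≠ b
  · obtain ⟨a, b, ha, hb, hav, hvb, hab⟩ := hinterior
    refine hasLinearSaturation_induce_ne_of_le hGH hsat hpath le_sup_left
      (hH.induce_sup_edge hav hvb hab) (fun x y hxy hxy' => ?_)
      ((hpath (c v)).diff_singleton_sup_edge hv ha hb hav hvb hab)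
    rcases ((edge_adj ..).mp (hxy.resolve_left hxy')).1 with ⟨rfl, rfl⟩ | ⟨rfl, rfl⟩
    exacts [⟨ha, hb⟩, ⟨hb, ha⟩]
  · exact hasLinearSaturation_induce_ne_of_le hGH hsat hpath le_rfl (hH.induce _)
      (fun x y h h' => absurd h h') <| (hpath (c v)).diff_singleton hv
        fun a ha b hb hav hvb => by_contra fun hab => hinterior ⟨a, b, ha, hb, hav, hvb, hab⟩
end
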